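/- For any n×n matrix M over a commutative ring, any m with 0 ≤ m ≤ n, and any upper unitriangular matrices u₁, u₂, the m-th lower-left principal minor satisfies Δ^sw_m(u₁ · M · u₂) = Δ^sw_m(M). In particular, the lower-left principal minors are invariant under left and right multiplication by upper unitriangular matrices. -/
import Mathlib


open Matrix

/-- The `m`-th lower-left (south-west) principal minor: last `m` rows, first `m` columns. -/
def swMinor {R : Type*} [CommRing R] {n : ℕ} (m : ℕ) (h : m ≤ n)
    (M : Matrix (Fin n) (Fin n) R) : R :=
  (M.submatrix (fun i : Fin m => (⟨n - m + i.val, by omega⟩ : Fin n))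
               (fun j : Fin m => Fin.castLE h j)).det

/-- Upper unitriangular: upper triangular with all diagonal entries equal to `1`. -/
def IsUpperUnitriangular {R : Type*} [CommRing R] {n : ℕ}
    (u : Matrix (Fin n) (Fin n) R) : Prop :=
  (∀ i j : Fin n, j < i → u i j = 0) ∧ (∀ i : Fin n, u i i = 1)

lemma sum_head_aux {R : Type*} [AddCommMonoid R] {n m : ℕ} (h : m ≤ n) (f : Fin n → R)
    (hf : ∀ k : Fin n, m ≤ k.val → f k = 0) :
    ∑ k, f k = ∑ k : Fin m, f (Fin.castLE h k) := by
  have e : m + (n - m) = n := by omega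
  rw [← (finCongr e).sum_comp f, Fin.sum_univ_add]
  have h1 : ∀ k : Fin (n - m), f (finCongr e (Fin.natAdd m k)) = 0 :=
    fun k => hf _ (by simp)
  simp only [h1, Finset.sum_const_zero, add_zero]
  exact Finset.sum_congr rfl fun k _ => congrArg f (by ext; simp)

lemma sum_tail_aux {R : Type*} [AddCommMonoid R] {n m : ℕ} (h : m ≤ n) (f : Fin n → R)
    (hf : ∀ k : Fin n, k.val < n - m → f k = 0) :
    ∑ k, f k = ∑ k : Fin m, f ⟨n - m + k.val, by omega⟩ := by
  have e : (n - m) + m = n := by omega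
  rw [← (finCongr e).sum_comp f, Fin.sum_univ_add]
  have h1 : ∀ k : Fin (n - m), f (finCongr e (Fin.castAdd m k)) = 0 :=
    fun k => hf _ (by simp)
  simp only [h1, Finset.sum_const_zero, zero_add]
  exact Finset.sum_congr rfl fun k _ => congrArg f (by ext; simp)

theorem swMinor_unitriangular_invariant {R : Type*} [CommRing R] {n m : ℕ} (h : m ≤ n)
    (M u₁ u₂ : Matrix (Fin n) (Fin n) R)
    (hu₁ : IsUpperUnitriangular u₁) (hu₂ : IsUpperUnitriangular u₂) :
    swMinor m h (u₁ * M * u₂) = swMinor m h M := by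
  let r : Fin m → Fin n := fun i => ⟨n - m + i.val, by omega⟩
  let c : Fin m → Fin n := fun j => Fin.castLE h j
  let A : Matrix (Fin m) (Fin m) R := u₁.submatrix r r
  let B : Matrix (Fin m) (Fin m) R := u₂.submatrix c c
  have key : (u₁ * M * u₂).submatrix r c = A * M.submatrix r c * B := by
    ext i j
    simp only [submatrix_apply, mul_apply, A, B]
    have hz2 : ∀ k : Fin n, m ≤ k.val →
        (∑ l, u₁ (r i) l * M l k) * u₂ k (c j) = 0 := by
      intro k hk
      have : (c j) < k := by
        have : j.val < m := j.isLt
        simp only [c, Fin.lt_def, Fin.coe_castLE]; omega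
      rw [hu₂.1 _ _ this, mul_zero]
    rw [sum_head_aux h _ hz2]
    refine Finset.sum_congr rfl fun k _ => ?_
    congr 1
    have hz1 : ∀ l : Fin n, l.val < n - m → u₁ (r i) l * M l (Fin.castLE h k) = 0 := by
      intro l hl
      have : l < r i := by simp only [r, Fin.lt_def]; omega
      rw [hu₁.1 _ _ this, zero_mul]
    rw [sum_tail_aux h _ hz1]
  have hAtri : A.BlockTriangular id := by
    intro i j hij
    have hij' : (j : ℕ) < i := hij
    apply hu₁.1
    simp only [r, Fin.lt_def]; omega
  have hBtri : B.BlockTriangular id := by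
    intro i j hij
    have hij' : (j : ℕ) < i := hij
    apply hu₂.1
    simp only [c, Fin.lt_def, Fin.coe_castLE]; omega
  have hAdet : A.det = 1 := by
    rw [Matrix.det_of_upperTriangular hAtri]
    exact Finset.prod_eq_one fun i _ => hu₁.2 _
  have hBdet : B.det = 1 := by
    rw [Matrix.det_of_upperTriangular hBtri]
    exact Finset.prod_eq_one fun i _ => hu₂.2 _
  show ((u₁ * M * u₂).submatrix r c).det = (M.submatrix r c).det
  rw [key, det_mul, det_mul, hAdet, hBdet, one_mul, mul_one]
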